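/- Let P be a simple n-dimensional convex polytope with m facets, different from the n-simplex, and let vc(P,v) be the vertex cut of P at a vertex v. Then the number of quadratic minimal generators of the Stanley-Reisner ideal satisfies β^{-1,4}(vc(P,v)) = β^{-1,4}(P) + m - n. -/

import Mathlib

/-! Every pair of facets of `vc(P, v)` either consists of two old facets, and is disjoint after
the cut exactly when it was before (a pair is never the set of `n ≥ 3` facets through `v`), or
contains the new facet `F₀`, and `{F₀, F}` is disjoint exactly when `F` does not pass through `v`.
Hence the cut creates precisely the `m - n` new disjoint pairs `{F₀, F}` with `v ∉ F`. -/

open Finset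

open scoped Classical

noncomputable section

/-- The nerve of the vertex cut `vc(P, v)`, where the simple `n`-polytope `P` has
facets indexed by `Fin m` with nerve `K` (`K S` ↔ the facets in `S` have nonempty
intersection), and `A` is the set of the `n` facets through the cut vertex `v`.
The new simplex facet is indexed by `none`; it meets exactly the facets through `v`
(and any proper subfamily of them), while the facets through `v` now have empty
common intersection. -/
def vcNerve {m : ℕ} (K : Finset (Fin m) → Prop) (A : Finset (Fin m)) :
    Finset (Option (Fin m)) → Prop :=
  fun S =>
    if none ∈ S then S.eraseNone ⊂ A
    else K S.eraseNone ∧ S.eraseNone ≠ A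

/-- The number of quadratic minimal generators `β^{-1,4}` of the Stanley–Reisner ideal
of a simple polytope with nerve `K`: the number of pairs of facets with empty
intersection. -/
def numDisjointPairs {V : Type*} [Fintype V] (K : Finset V → Prop) : ℕ :=
  (((Finset.univ : Finset V).powersetCard 2).filter (fun S => ¬ K S)).card

open Function (Embedding)

theorem powersetCard_two_univ_option (V : Type*) [Fintype V] :
    (univ : Finset (Option V)).powersetCard 2 =
      ((univ : Finset V).powersetCard 2).map (mapEmbedding Embedding.some).toEmbedding ∪
        (univ : Finset V).image (fun i => {none, some i}) := by
  rw [univ_option, insertNone, OrderEmbedding.coe_ofMapLEIff, cons_eq_insert,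
    powersetCard_succ_insert (by simp), powersetCard_map, powersetCard_one, map_map,
    map_eq_image (Embedding.some.trans _), image_image]
  rfl

theorem numDisjointPairs_option {V : Type*} [Fintype V] (L : Finset (Option V) → Prop) :
    numDisjointPairs L =
      numDisjointPairs (fun T => L (T.map Embedding.some)) + #{i | ¬ L {none, some i}} := by
  have hdisj : Disjoint
      (((univ : Finset V).powersetCard 2).map (mapEmbedding Embedding.some).toEmbedding)
      ((univ : Finset V).image (fun i => {none, some i})) := by
    simp only [disjoint_left, mem_map, mem_image]
    rintro _ ⟨T, -, rfl⟩ ⟨i, -, h⟩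
    simpa using congrArg (none ∈ ·) h
  have hinj : Function.Injective (fun i : V => ({none, some i} : Finset (Option V))) := by
    intro i j h
    simpa using congrArg (some i ∈ ·) h
  rw [numDisjointPairs, powersetCard_two_univ_option, filter_union,
    card_union_of_disjoint (disjoint_filter_filter hdisj), filter_map, card_map, filter_image,
    card_image_of_injective _ hinj]
  rfl

theorem numDisjointPairs_congr {V : Type*} [Fintype V] {K L : Finset V → Prop}
    (h : ∀ S : Finset V, #S = 2 → (K S ↔ L S)) : numDisjointPairs K = numDisjointPairs L := by
  unfold numDisjointPairs
  congr 1
  exact filter_congr fun S hS => not_congr (h S (mem_powersetCard.mp hS).2)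

section vcNerve

variable {m : ℕ} (K : Finset (Fin m) → Prop) {A : Finset (Fin m)}

theorem vcNerve_map_some {T : Finset (Fin m)} (hT : T ≠ A) :
    vcNerve K A (T.map Embedding.some) ↔ K T := by
  simp [vcNerve, eraseNone_map_some, hT]

theorem vcNerve_none_some_iff (hA : 2 ≤ #A) (i : Fin m) :
    vcNerve K A {none, some i} ↔ i ∈ A := by
  have herase : ({none, some i} : Finset (Option (Fin m))).eraseNone = {i} := by
    ext; simp
  have hne : ({i} : Finset (Fin m)) ≠ A := by
    rintro rfl; simp at hA
  rw [vcNerve, if_pos (mem_insert_self _ _), herase, ssubset_iff_subset_ne, singleton_subset_iff]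
  exact and_iff_left hne

end vcNerve

theorem betti_one_four_of_vertex_cut_general (n m : ℕ) (hn : 3 ≤ n)
    (K : Finset (Fin m) → Prop) (A : Finset (Fin m))
    (hAcard : A.card = n) :
    numDisjointPairs (vcNerve K A) = numDisjointPairs K + (m - n) := by
  rw [numDisjointPairs_option]
  congr 1
  · exact numDisjointPairs_congr fun T hT => vcNerve_map_some K (by rintro rfl; omega)
  · calc #{i | ¬vcNerve K A {none, some i}} = #Aᶜ := by
          congr 1
          ext i
          simp [vcNerve_none_some_iff K (by omega : 2 ≤ #A)]
      _ = m - n := by rw [card_compl, Fintype.card_fin, hAcard]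

/-- Let `P` be a simple `n`-dimensional convex polytope (`3 ≤ n`) with `m` facets,
different from the `n`-simplex (so `m ≥ n + 2`), with nerve `K` (downward closed,
with all `n + 1`-fold intersections empty by simplicity) and let `A` (a face of `K`
of cardinality `n`) be the set of facets through a vertex `v`.  Then the number of
quadratic minimal generators of the Stanley–Reisner ideal satisfies
`β^{-1,4}(vc(P, v)) = β^{-1,4}(P) + m - n`. -/
theorem betti_one_four_of_vertex_cut (n m : ℕ) (hn : 3 ≤ n) (hm : n + 2 ≤ m)
    (K : Finset (Fin m) → Prop) (A : Finset (Fin m))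
    (hdc : ∀ S T : Finset (Fin m), T ⊆ S → K S → K T)
    (hsimple : ∀ S : Finset (Fin m), n < S.card → ¬ K S)
    (hAcard : A.card = n) (hA : K A) :
    numDisjointPairs (vcNerve K A) = numDisjointPairs K + (m - n) :=
  betti_one_four_of_vertex_cut_general n m hn K A hAcard

end
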